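/- arXiv:2009.09262 — 2 statements merged into one kernel-verified Lean document; each statement's English description precedes it below -/
import Mathlib

section
/- Let L be a free ℤ-module of finite rank with an integral symmetric bilinear form whose real extension has an orthogonal decomposition L ⊗ ℝ = W ⊕ W⊥ where the form is positive definite on W and negative definite on W⊥. If G ⊆ O(L) is a subgroup such that every element of G preserves the subspace W (hence also W⊥), then G is finite. -/
/-!
Splitting `ℝ ⊗ L = W ⊕ W⊥` and flipping the sign of the form on `W⊥` gives a positive definite
form (the majorant). An isometry preserving `W` also preserves `W⊥`, hence commutes with both
projections and preserves the majorant. Writing an element of `G` as an integer matrix in a basis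
of `L`, each entry is a pairing with a vector of the dual basis of the majorant, so Cauchy–Schwarz
bounds it independently of the element; only finitely many integer matrices satisfy these bounds.
-/

open scoped TensorProduct
open LinearMap (BilinForm)

theorem Int.finite_setOf_sq_le (c : ℝ) : {n : ℤ | (n : ℝ) ^ 2 ≤ c}.Finite := by
  refine (Set.finite_Icc (-⌈c⌉) ⌈c⌉).subset fun n hn ↦ abs_le.1 ?_
  have hsq : ((n ^ 2 : ℤ) : ℝ) ≤ ⌈c⌉ := by push_cast; exact hn.trans (Int.le_ceil c)
  exact (Int.natCast_natAbs n ▸ Int.natAbs_le_self_sq n).trans (by exact_mod_cast hsq)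

namespace Submodule

variable {R E : Type*} [Ring R] [AddCommGroup E] [Module R E] {p q : Submodule R E}

theorem commute_projection_of_mapsTo (hpq : IsCompl p q) {f : Module.End R E}
    (hp : Set.MapsTo f p p) (hq : Set.MapsTo f q q) : Commute (p.projection q hpq) f := by
  ext x
  have hx := congrArg f (projection_add_projection_eq_self hpq x)
  rw [map_add] at hx
  simp only [Module.End.mul_apply]
  conv_lhs => rw [← hx]
  rw [map_add, projection_apply_of_mem_left hpq (hp (projection_apply_mem hpq x)),
    (projection_apply_eq_zero_iff hpq).2 (hq (projection_apply_mem hpq.symm x)), add_zero]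

end Submodule

namespace LinearMap.BilinForm

section BaseChange
variable {R A M : Type*} [CommRing R] [CommRing A] [Algebra R A] [AddCommGroup M] [Module R M]

theorem ext_one_tmul {B₁ B₂ : BilinForm A (A ⊗[R] M)}
    (h : ∀ x y, B₁ (1 ⊗ₜ x) (1 ⊗ₜ y) = B₂ (1 ⊗ₜ x) (1 ⊗ₜ y)) : B₁ = B₂ := by
  have htmul (a : A) (x : M) : a ⊗ₜ[R] x = a • (1 : A) ⊗ₜ x := by
    rw [TensorProduct.smul_tmul', smul_eq_mul, mul_one]
  refine TensorProduct.AlgebraTensorModule.ext fun a x ↦ ?_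
  refine TensorProduct.AlgebraTensorModule.ext fun b y ↦ ?_
  rw [htmul a, htmul b]
  simp only [map_smul, LinearMap.smul_apply, h]

end BaseChange

section Majorant
variable {R V : Type*} [CommRing R] [AddCommGroup V] [Module R V] {B : BilinForm R V}
  {W : Submodule R V}

/-- Siegel's majorant of `B` with respect to the splitting `W ⊕ W⊥`. -/
noncomputable def majorant (B : BilinForm R V) (hW : IsCompl W (B.orthogonal W)) :
    BilinForm R V :=
  B.compl₁₂ (W.projection _ hW) (W.projection _ hW) -
    B.compl₁₂ ((B.orthogonal W).projection W hW.symm) ((B.orthogonal W).projection W hW.symm)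

theorem majorant_apply (hW : IsCompl W (B.orthogonal W)) (v w : V) :
    B.majorant hW v w = B (W.projection _ hW v) (W.projection _ hW w) -
      B ((B.orthogonal W).projection W hW.symm v) ((B.orthogonal W).projection W hW.symm w) :=
  rfl

theorem isSymm_majorant (hB : B.IsSymm) (hW : IsCompl W (B.orthogonal W)) :
    (B.majorant hW).IsSymm := by
  refine ⟨fun v w ↦ ?_⟩
  simp only [majorant_apply]
  rw [hB.eq (W.projection _ hW v), hB.eq ((B.orthogonal W).projection W hW.symm v)]

theorem majorant_pos [LinearOrder R] [IsStrictOrderedRing R] (hW : IsCompl W (B.orthogonal W))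
    (hpos : ∀ v ∈ W, v ≠ 0 → 0 < B v v) (hneg : ∀ v ∈ B.orthogonal W, v ≠ 0 → B v v < 0)
    {v : V} (hv : v ≠ 0) : 0 < B.majorant hW v v := by
  have hsplit : ∀ x ∈ W, ∀ y ∈ B.orthogonal W, x + y ≠ 0 → 0 < B x x - B y y := by
    intro x hx y hy hxy
    rcases eq_or_ne x 0 with rfl | hx0
    · simpa using hneg y hy (by simpa using hxy)
    · have := hpos x hx hx0
      rcases eq_or_ne y 0 with rfl | hy0
      · simpa using this
      · linarith [hneg y hy hy0]
  exact hsplit _ (W.projection_apply_mem hW v) _ ((B.orthogonal W).projection_apply_mem hW.symm v)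
    (by rwa [Submodule.projection_add_projection_eq_self])

theorem mapsTo_orthogonal {f : Module.End R V} (hf : ∀ v w, B (f v) (f w) = B v w)
    (hfW : W ≤ W.map f) : Set.MapsTo f (B.orthogonal W) (B.orthogonal W) := by
  intro v hv
  rw [SetLike.mem_coe, mem_orthogonal_iff] at hv ⊢
  intro u hu
  obtain ⟨u, hu', rfl⟩ := hfW hu
  exact (hf u v).trans (hv u hu')

theorem majorant_apply_apply_of_isometry (hW : IsCompl W (B.orthogonal W)) {f : Module.End R V}
    (hf : ∀ v w, B (f v) (f w) = B v w) (hfW : Set.MapsTo f W W) (hWf : W ≤ W.map f)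
    (v w : V) : B.majorant hW (f v) (f w) = B.majorant hW v w := by
  have hfWp := mapsTo_orthogonal hf hWf
  have h₁ := Submodule.commute_projection_of_mapsTo hW hfW hfWp
  have h₂ := Submodule.commute_projection_of_mapsTo hW.symm hfWp hfW
  simp only [majorant_apply, ← Module.End.mul_apply, h₁.eq, h₂.eq]
  simp only [Module.End.mul_apply, hf]

end Majorant

section Lattice
variable {L : Type*} [AddCommGroup L] [Module.Free ℤ L] [Module.Finite ℤ L]

theorem finite_setOf_baseChange_isometry {Q : BilinForm ℝ (ℝ ⊗[ℤ] L)}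
    (hQ : ∀ v, v ≠ 0 → 0 < Q v v) (hQs : Q.IsSymm) :
    {g : L →ₗ[ℤ] L | ∀ v w, Q (g.baseChange ℝ v) (g.baseChange ℝ w) = Q v w}.Finite := by
  set bL := Module.Free.chooseBasis ℤ L
  set bV := bL.baseChange ℝ
  have hQnd : Q.Nondegenerate :=
    ⟨fun x hx ↦ by_contra fun h ↦ (hQ x h).ne' (hx x),
      fun x hx ↦ by_contra fun h ↦ (hQ x h).ne' (hx x)⟩
  set d := Q.dualBasis hQnd bV
  have hrepr (v : ℝ ⊗[ℤ] L) (i) : bV.repr v i = Q v (d i) := by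
    rw [← dualBasis_repr_apply hQnd d, dualBasis_dualBasis hQnd hQs]
  have hentry (g : L →ₗ[ℤ] L) (i j) :
      (LinearMap.toMatrix bL bL g i j : ℝ) = Q (g.baseChange ℝ (bV j)) (d i) := by
    rw [LinearMap.toMatrix_apply, ← hrepr]
    simp [bV]
  refine Set.Finite.of_finite_image (f := LinearMap.toMatrix bL bL) ?_
    (LinearMap.toMatrix bL bL).injective.injOn
  refine (Set.Finite.pi (t := fun i ↦ Set.pi Set.univ fun j ↦
    {n : ℤ | (n : ℝ) ^ 2 ≤ Q (bV j) (bV j) * Q (d i) (d i)})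
    fun i ↦ Set.Finite.pi fun j ↦ Int.finite_setOf_sq_le _).subset ?_
  rintro _ ⟨g, hg, rfl⟩ i - j -
  have hnn : ∀ v, 0 ≤ Q v v := fun v ↦ by
    rcases eq_or_ne v 0 with rfl | hv
    · simp
    · exact (hQ v hv).le
  rw [Set.mem_ofPred_eq, hentry, ← hg (bV j) (bV j)]
  exact Q.apply_sq_le_of_symm hnn (isSymm_iff.1 hQs) (g.baseChange ℝ (bV j)) (d i)

end Lattice

end LinearMap.BilinForm

open LinearMap.BilinForm in
theorem stmt5_general (L : Type*) [AddCommGroup L] [Module.Free ℤ L] [Module.Finite ℤ L]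
    (b : LinearMap.BilinForm ℤ L)
    (bR : LinearMap.BilinForm ℝ (ℝ ⊗[ℤ] L))
    (hcompat : ∀ x y : L, bR ((1 : ℝ) ⊗ₜ[ℤ] x) ((1 : ℝ) ⊗ₜ[ℤ] y) = (b x y : ℝ))
    (hRsymm : ∀ v w, bR v w = bR w v)
    (W : Submodule ℝ (ℝ ⊗[ℤ] L))
    (hpos : ∀ v ∈ W, v ≠ 0 → 0 < bR v v)
    (hneg : ∀ v ∈ bR.orthogonal W, v ≠ 0 → bR v v < 0)
    (hcompl : IsCompl W (bR.orthogonal W))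
    (G : Subgroup (L ≃ₗ[ℤ] L))
    (hiso : ∀ g ∈ G, ∀ x y : L, b (g x) (g y) = b x y)
    (hW : ∀ g ∈ G, ∀ v ∈ W, LinearMap.baseChange ℝ ((g : L ≃ₗ[ℤ] L) : L →ₗ[ℤ] L) v ∈ W) :
    Finite G := by
  have hisom (g : L ≃ₗ[ℤ] L) (hg : g ∈ G) (v w) :
      bR (g.toLinearMap.baseChange ℝ v) (g.toLinearMap.baseChange ℝ w) = bR v w := by
    refine LinearMap.congr_fun₂ (ext_one_tmul (B₁ := bR.compl₁₂ _ _) fun x y ↦ ?_) v w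
    simp [hcompat, hiso g hg]
  have hsurj (g : L ≃ₗ[ℤ] L) (hg : g ∈ G) : W ≤ W.map (g.toLinearMap.baseChange ℝ) := by
    intro w hw
    refine ⟨(g.baseChange ℤ ℝ L L).symm w, hW g⁻¹ (inv_mem hg) w hw, ?_⟩
    exact (g.baseChange ℤ ℝ L L).apply_symm_apply w
  have hfin := finite_setOf_baseChange_isometry (fun _ ↦ majorant_pos hcompl hpos hneg)
    (isSymm_majorant (isSymm_def.2 hRsymm) hcompl)
  have := (hfin.subset (t := Set.range fun g : G ↦ g.1.toLinearMap) ?_).to_subtype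
  · exact Finite.of_injective_finite_range fun g h hgh ↦
      Subtype.ext (LinearEquiv.toLinearMap_injective hgh)
  · rintro _ ⟨g, rfl⟩
    exact majorant_apply_apply_of_isometry hcompl (hisom g g.2) (hW g g.2) (hsurj g g.2)

/-- Let `L` be a lattice with a nondegenerate integral symmetric
bilinear form whose real extension decomposes orthogonally as `W ⊕ W⊥` with the
form positive definite on `W` and negative definite on `W⊥`. Any subgroup `G`
of `O(L)` all of whose elements preserve `W` is finite. -/
theorem stmt5 (L : Type*) [AddCommGroup L] [Module.Free ℤ L] [Module.Finite ℤ L]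
    (b : LinearMap.BilinForm ℤ L) (hsymm : ∀ x y : L, b x y = b y x)
    (hnd : b.Nondegenerate)
    (bR : LinearMap.BilinForm ℝ (ℝ ⊗[ℤ] L))
    (hcompat : ∀ x y : L, bR ((1 : ℝ) ⊗ₜ[ℤ] x) ((1 : ℝ) ⊗ₜ[ℤ] y) = (b x y : ℝ))
    (hRsymm : ∀ v w, bR v w = bR w v)
    (W : Submodule ℝ (ℝ ⊗[ℤ] L))
    (hpos : ∀ v ∈ W, v ≠ 0 → 0 < bR v v)
    (hneg : ∀ v ∈ bR.orthogonal W, v ≠ 0 → bR v v < 0)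
    (hcompl : IsCompl W (bR.orthogonal W))
    (G : Subgroup (L ≃ₗ[ℤ] L))
    (hiso : ∀ g ∈ G, ∀ x y : L, b (g x) (g y) = b x y)
    (hW : ∀ g ∈ G, ∀ v ∈ W, LinearMap.baseChange ℝ ((g : L ≃ₗ[ℤ] L) : L →ₗ[ℤ] L) v ∈ W) :
    Finite G :=
  stmt5_general L b bR hcompat hRsymm W hpos hneg hcompl G hiso hW
end

section
/- Let X be a smooth complex projective variety whose rational even cohomology ring H^{even}(X, ℚ) is generated as a ℚ-algebra by H²(X, ℚ), and suppose x₁, …, x_p ∈ H²(X, ℚ) are classes spanning H²(X,ℚ) that are first Chern classes of line bundles L₁, …, L_p. Then the Chern characters ch(L₁^{k₁} ⊗ ⋯ ⊗ L_p^{k_p}) = exp(k₁x₁ + ⋯ + k_p x_p), for (k₁,…,k_p) ∈ ℤ^p, span H^{even}(X, ℚ) as a ℚ-vector space. -/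
/-!
The sums in the statement are `IsNilpotent.exp (∑ kᵢ xᵢ)`. Since all `∑ kᵢ xᵢ` commute and are
nilpotent, `k ↦ exp (∑ kᵢ xᵢ)` is a monoid homomorphism `ℤ^p → A`, so its image is closed under
multiplication and its span is the subalgebra it generates. That span contains every `xᵢ`: the
values `exp (t xᵢ) = ∑ₘ (tᵐ / m!) xᵢᵐ` at sufficiently many integers `t` determine the
coefficients of this polynomial in `t` by Vandermonde, and the coefficient of `t` is `xᵢ`.
Since the `xᵢ` generate `A`, the span is `A`.
-/

open Finset IsNilpotent

theorem Submodule.mem_of_forall_sum_pow_smul_mem {K M : Type*} [Field K] [AddCommGroup M]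
    [Module K M] {V : Submodule K M} {N : ℕ} {t : Fin N → K} (ht : Function.Injective t)
    {w : Fin N → M} (h : ∀ j, ∑ i : Fin N, t j ^ (i : ℕ) • w i ∈ V) (i : Fin N) : w i ∈ V := by
  rw [← Submodule.Quotient.mk_eq_zero, ← Module.forall_dual_apply_eq_zero_iff K]
  intro φ
  have hφ : (fun i => φ (V.mkQ (w i))) = 0 := by
    refine Matrix.eq_zero_of_forall_index_sum_pow_mul_eq_zero ht fun j => ?_
    have hj : V.mkQ (∑ i : Fin N, t j ^ (i : ℕ) • w i) = 0 :=
      (Submodule.Quotient.mk_eq_zero V).2 (h j)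
    simpa using congr_arg φ hj
  exact congr_fun hφ i

section ExpOfNilpotent

variable {G A : Type*} [AddCommMonoid G] [CommRing A] [Algebra ℚ A]

noncomputable def AddMonoidHom.expComp (u : G →+ A) (hu : ∀ g, IsNilpotent (u g)) :
    Multiplicative G →* A where
  toFun g := exp (u g.toAdd)
  map_one' := by simp
  map_mul' g h := by
    simp [exp_add_of_commute (Commute.all _ _) (hu _) (hu _)]

theorem exp_smul_eq_sum_pow_smul {a : A} {N : ℕ} (ha : a ^ N = 0) (t : ℚ) :
    exp (t • a) = ∑ i : Fin N, t ^ (i : ℕ) • ((i : ℕ).factorial : ℚ)⁻¹ • a ^ (i : ℕ) := by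
  rw [exp_eq_sum (k := N) (by rw [smul_pow, ha, smul_zero]), ← Fin.sum_univ_eq_sum_range]
  simp only [smul_pow]
  exact sum_congr rfl fun i _ => smul_comm _ _ _

theorem mem_span_range_exp (u : G →+ A) {g : G} (hg : IsNilpotent (u g)) :
    u g ∈ Submodule.span ℚ (Set.range fun g => exp (u g)) := by
  obtain ⟨n, hn⟩ := hg
  have hN : u g ^ (n + 2) = 0 := pow_eq_zero_of_le (by omega) hn
  have hsample (j : Fin (n + 2)) :
      ∑ i : Fin (n + 2), ((j : ℕ) : ℚ) ^ (i : ℕ) • ((i : ℕ).factorial : ℚ)⁻¹ • u g ^ (i : ℕ) ∈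
        Submodule.span ℚ (Set.range fun g => exp (u g)) := by
    rw [← exp_smul_eq_sum_pow_smul hN, Nat.cast_smul_eq_nsmul, ← map_nsmul]
    exact Submodule.subset_span ⟨_, rfl⟩
  simpa using Submodule.mem_of_forall_sum_pow_smul_mem
    (Nat.cast_injective.comp Fin.val_injective) hsample 1

theorem adjoin_range_le_span_range_exp (u : G →+ A) (hu : ∀ g, IsNilpotent (u g)) :
    Subalgebra.toSubmodule (Algebra.adjoin ℚ (Set.range u)) ≤
      Submodule.span ℚ (Set.range fun g => exp (u g)) := by
  have hspan : Submodule.span ℚ (Set.range fun g => exp (u g)) =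
      Subalgebra.toSubmodule (Algebra.adjoin ℚ (Set.range fun g => exp (u g))) := by
    have hrange : Set.range (fun g => exp (u g)) = MonoidHom.mrange (u.expComp hu) := by
      rw [MonoidHom.coe_mrange]
      rfl
    rw [Algebra.adjoin_eq_span, hrange, Submonoid.closure_eq]
  rw [hspan]
  refine Subalgebra.toSubmodule.monotone (Algebra.adjoin_le ?_)
  rintro _ ⟨g, rfl⟩
  rw [SetLike.mem_coe, ← Subalgebra.mem_toSubmodule, ← hspan]
  exact mem_span_range_exp u (hu g)

end ExpOfNilpotent

theorem stmt7_general (A : Type*) [CommRing A] [Algebra ℚ A]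
    (p d : ℕ) (x : Fin p → A)
    (hgen : Algebra.adjoin ℚ (Set.range x) = ⊤)
    (hnil : ∀ c : Fin p → ℚ, (∑ i, c i • x i) ^ d = 0) :
    Submodule.span ℚ
      {a : A | ∃ k : Fin p → ℤ,
        a = ∑ m ∈ Finset.range d, ((m.factorial : ℚ)⁻¹) • (∑ i, (k i : ℚ) • x i) ^ m} = ⊤ := by
  let u : (Fin p → ℤ) →+ A :=
    { toFun k := ∑ i, (k i : ℚ) • x i
      map_zero' := by simp
      map_add' k l := by simp [add_smul, sum_add_distrib] }
  have hu (k : Fin p → ℤ) : u k ^ d = 0 := hnil _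
  have hexp : {a : A | ∃ k : Fin p → ℤ,
      a = ∑ m ∈ Finset.range d, ((m.factorial : ℚ)⁻¹) • (∑ i, (k i : ℚ) • x i) ^ m} =
      Set.range fun k => exp (u k) := by
    ext a
    simp only [Set.mem_range, exp_eq_sum (hu _), eq_comm]
    rfl
  have hx : Set.range x ⊆ Set.range u := by
    rintro _ ⟨i, rfl⟩
    exact ⟨Pi.single i 1, by simp [u, Pi.single_apply]⟩
  rw [hexp, eq_top_iff, ← Algebra.top_toSubmodule, ← hgen]
  exact (Subalgebra.toSubmodule.monotone (Algebra.adjoin_mono hx)).trans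
    (adjoin_range_le_span_range_exp u fun k => ⟨d, hu k⟩)

/-- abstract version: Let `A` be a finite-dimensional commutative
`ℚ`-algebra generated by nilpotent elements `x₁,…,x_p` (all `ℚ`-linear
combinations of which have vanishing `d`-th power). Then the truncated
exponentials `E(k) = ∑_{m<d} (1/m!)(∑ kᵢxᵢ)^m`, for `k ∈ ℤ^p`, span `A` as a
`ℚ`-vector space. -/
theorem stmt7 (A : Type*) [CommRing A] [Algebra ℚ A] [FiniteDimensional ℚ A]
    (p d : ℕ) (x : Fin p → A)
    (hgen : Algebra.adjoin ℚ (Set.range x) = ⊤)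
    (hnil : ∀ c : Fin p → ℚ, (∑ i, c i • x i) ^ d = 0) :
    Submodule.span ℚ
      {a : A | ∃ k : Fin p → ℤ,
        a = ∑ m ∈ Finset.range d, ((m.factorial : ℚ)⁻¹) • (∑ i, (k i : ℚ) • x i) ^ m} = ⊤ :=
  stmt7_general A p d x hgen hnil
end
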